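/- Let s ≥ 2 and let 1 ≤ k_1 ≤ k_2 ≤ ⋯ ≤ k_s < n and 1 < l_1 ≤ l_2 ≤ ⋯ ≤ l_s ≤ n satisfy k_i < l_i and l_i − k_i + 1 ≥ m for all i. Set J := J_{k_1 l_1} J_{k_2 l_2} ⋯ J_{k_s l_s}, and let f_1 > f_2 > ⋯ > f_r be all diagonal monomials of Y_{k_1 l_1}, ordered decreasingly by τ. Fix 0 ≤ u ≤ r−1, write f_{u+1} = X_{1c_1}X_{2c_2}⋯X_{mc_m}, and set c_0 = k_1 − 1. Then the colon ideal (⟨J, f_1, …, f_u⟩ : f_{u+1}) equals the ideal generated by J_{k_2 l_2} ⋯ J_{k_s l_s} together with the variables X_{ib} with 1 ≤ i ≤ m and c_{i−1} < b < c_i. -/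

import Mathlib

open MvPolynomial

/-- The exponent vector of the diagonal monomial with column sequence `c`
(rows `1,…,m`, row `i` contributing the variable `X (i, c i)`). -/
noncomputable def expVec (m : ℕ) (c : ℕ → ℕ) : (ℕ × ℕ) →₀ ℕ :=
  ∑ i ∈ Finset.Icc 1 m, Finsupp.single (i, c i) 1

/-- The diagonal monomial `X_{1 c₁} X_{2 c₂} ⋯ X_{m c_m}`. -/
noncomputable def diagMon (K : Type*) [Field K] (m : ℕ) (c : ℕ → ℕ) :
    MvPolynomial (ℕ × ℕ) K :=
  ∏ i ∈ Finset.Icc 1 m, MvPolynomial.X (i, c i)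

/-- `tauGt a b` : the monomial with exponent vector `a` is strictly larger than the one
with exponent vector `b` in the lexicographic monomial order τ induced by
`X 11 > X 12 > ⋯ > X 1n > X 21 > ⋯ > X mn` : at the most significant variable where
they differ (i.e. the lexicographically smallest index pair), `a` has the bigger exponent. -/
def tauGt (a b : (ℕ × ℕ) →₀ ℕ) : Prop :=
  ∃ p : ℕ × ℕ, b p < a p ∧
    ∀ q : ℕ × ℕ, (q.1 < p.1 ∨ (q.1 = p.1 ∧ q.2 < p.2)) → a q = b q

/-- `c` is the column sequence of a diagonal monomial of the submatrix `Y_{kl}`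
(columns `k` through `l`): strictly increasing on `1,…,m` with values in `[k,l]`. -/
def IsDiagSeq (m k l : ℕ) (c : ℕ → ℕ) : Prop :=
  (∀ i, 1 ≤ i → i < m → c i < c (i + 1)) ∧ k ≤ c 1 ∧ c m ≤ l

/-- The ideal `J_{kl}` of `K[X]` generated by all diagonal monomials of `Y_{kl}`. -/
noncomputable def Jkl (K : Type*) [Field K] (m k l : ℕ) : Ideal (MvPolynomial (ℕ × ℕ) K) :=
  Ideal.span {g | ∃ c, IsDiagSeq m k l c ∧ g = diagMon K m c}

/-!
All ideals involved are monomial ideals, and the colon of a monomial ideal by a monomial `f` is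
generated by the quotients `u / gcd(u, f)` of its generators `u`; so the theorem is a statement
about divisibility of exponent vectors.

A diagonal monomial `X_{1a_1}⋯X_{ma_m}` that is τ-greater than `f = X_{1c_1}⋯X_{mc_m}` first
differs from `f` in a row `i` with `c_{i-1} < a_i < c_i`, so its quotient is divisible by the gap
variable `X_{ia_i}`; conversely, replacing `c_i` by such a `b` in `f` gives a τ-greater diagonal
monomial whose quotient is `X_{ib}`. For a generator `g_1⋯g_s` of `J`, either some `g_j` uses a gap
variable, or every entry of row `i` is at least `c_i`. In the latter case sort, row by row, the
column indices of the `s` factors: the sorted factors are again diagonal monomials of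
`Y_{k_1l_1}, …, Y_{k_sl_s}` with the same product, the first one contains every variable of `f`
that occurs in the product, and so the other `s - 1` divide the quotient.
-/

open Finset
open scoped Pointwise

section MonomialIdeal

variable {σ R : Type*} [CommSemiring R]

theorem MvPolynomial.span_monomial_image_colon_eq {S T : Set (σ →₀ ℕ)} {d : σ →₀ ℕ}
    (h : ∀ e, (∃ v ∈ S, v ≤ e + d) ↔ ∃ v ∈ T, v ≤ e) :
    (Ideal.span ((fun v => monomial v (1 : R)) '' S)).colon (Ideal.span {monomial d (1 : R)}) =
      Ideal.span ((fun v => monomial v (1 : R)) '' T) := by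
  ext x
  have hsupp : (x * monomial d (1 : R)).support = x.support.map (addRightEmbedding d) :=
    AddMonoidAlgebra.support_coeff_mul_single x 1 (by simp) d
  rw [Ideal.mem_colon_span_singleton, mem_ideal_span_monomial_image,
    mem_ideal_span_monomial_image, hsupp]
  simp only [Finset.forall_mem_map, addRightEmbedding_apply, h]

theorem MvPolynomial.span_monomial_image_mul {S T : Set (σ →₀ ℕ)} :
    Ideal.span ((fun v => monomial v (1 : R)) '' S) *
        Ideal.span ((fun v => monomial v (1 : R)) '' T) =
      Ideal.span ((fun v => monomial v (1 : R)) '' (S + T)) := by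
  rw [Ideal.span_mul_span']
  congr 1
  ext x
  simp only [Set.mem_mul, Set.mem_image, Set.mem_add]
  constructor
  · rintro ⟨_, ⟨a, ha, rfl⟩, _, ⟨b, hb, rfl⟩, rfl⟩
    exact ⟨a + b, ⟨a, ha, b, hb, rfl⟩, by rw [monomial_mul, one_mul]⟩
  · rintro ⟨_, ⟨a, ha, b, hb, rfl⟩, rfl⟩
    exact ⟨_, ⟨a, ha, rfl⟩, _, ⟨b, hb, rfl⟩, by rw [monomial_mul, one_mul]⟩

theorem MvPolynomial.prod_span_monomial_image {ι : Type*} (t : Finset ι)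
    (S : ι → Set (σ →₀ ℕ)) :
    ∏ j ∈ t, Ideal.span ((fun v => monomial v (1 : R)) '' S j) =
      Ideal.span ((fun v => monomial v (1 : R)) '' ∑ j ∈ t, S j) := by
  classical
  induction t using Finset.induction_on with
  | empty => simp
  | insert j t hj ih => rw [prod_insert hj, sum_insert hj, ih, span_monomial_image_mul]

end MonomialIdeal

theorem List.Pairwise.pred_getD_iff {L : List ℕ} (hL : L.Pairwise (· ≤ ·)) {p : ℕ → Prop}
    [DecidablePred p] (hp : Antitone p) {q : ℕ} (hq : q < L.length) :
    p (L.getD q 0) ↔ q < L.countP (fun x => p x) := by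
  induction L generalizing q with
  | nil => simp at hq
  | cons x L ih =>
    rw [List.pairwise_cons] at hL
    by_cases hx : p x
    · cases q with
      | zero => simp [hx]
      | succ q =>
        rw [List.getD_cons_succ, ih hL.2 (by simpa using hq), List.countP_cons_of_pos (by simpa)]
        omega
    · have hnone : ∀ y ∈ L, ¬ p y := fun y hy hy' => hx (hp (hL.1 y hy) hy')
      have hL0 : L.countP (fun x => p x) = 0 := List.countP_eq_zero.2 (by simpa)
      cases q with
      | zero => simp [hx, hL0]
      | succ q =>
        have hmem : L.getD q 0 ∈ L := by
          rw [List.getD_eq_getElem _ _ (by simpa using hq)]; exact List.getElem_mem _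
        rw [List.getD_cons_succ, List.countP_cons_of_neg (by simpa), hL0]
        simpa using hnone _ hmem

/-- The `t`-th smallest of `f 1, …, f s`, counted with multiplicity; `t` runs from `1`. -/
def kthSmallest (s : ℕ) (f : ℕ → ℕ) (t : ℕ) : ℕ :=
  (((Icc 1 s).val.map f).sort (· ≤ ·)).getD (t - 1) 0

section KthSmallest

variable {s t : ℕ} {f : ℕ → ℕ}

theorem pred_kthSmallest_iff {p : ℕ → Prop} [DecidablePred p] (hp : Antitone p)
    (ht : t ∈ Icc 1 s) : p (kthSmallest s f t) ↔ t ≤ #{j ∈ Icc 1 s | p (f j)} := by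
  rw [mem_Icc] at ht
  have hsort := ((Icc 1 s).val.map f).pairwise_sort (· ≤ ·)
  rw [kthSmallest, hsort.pred_getD_iff hp (by simp; omega), ← Multiset.coe_countP,
    Multiset.sort_eq, Multiset.countP_map, card_def, filter_val]
  omega

theorem le_kthSmallest {x : ℕ} (h : ∀ j ∈ Icc 1 s, x ≤ f j) (ht : t ∈ Icc 1 s) :
    x ≤ kthSmallest s f t := by
  by_contra hlt
  have hcard := (pred_kthSmallest_iff (p := (· < x)) (fun _ _ => lt_of_le_of_lt) ht).1
    (not_le.1 hlt)
  rw [filter_false_of_mem fun j hj => not_lt.2 (h j hj), card_empty] at hcard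
  exact (mem_Icc.1 ht).1.not_gt (by omega)

theorem kthSmallest_one_le {j : ℕ} (hj : j ∈ Icc 1 s) : kthSmallest s f 1 ≤ f j :=
  (pred_kthSmallest_iff (p := (· ≤ f j)) (fun _ _ => le_trans)
    (mem_Icc.2 ⟨le_rfl, (mem_Icc.1 hj).1.trans (mem_Icc.1 hj).2⟩)).2
    (card_pos.2 ⟨j, mem_filter.2 ⟨hj, le_rfl⟩⟩)

theorem map_kthSmallest : (Icc 1 s).val.map (kthSmallest s f) = (Icc 1 s).val.map f := by
  set L := ((Icc 1 s).val.map f).sort (· ≤ ·) with hL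
  have hlen : L.length = s := by simp [L]
  have hget : (List.range' 1 s).map (kthSmallest s f) = L :=
    List.ext_getElem (by simp [hlen]) fun q _ hq => by
      simp [kthSmallest, ← hL, List.getElem?_eq_getElem hq]
  calc (Icc 1 s).val.map (kthSmallest s f)
      = ((List.range' 1 s).map (kthSmallest s f) : Multiset ℕ) := by simp [Nat.Icc_eq_range']
    _ = (Icc 1 s).val.map f := by rw [hget, Multiset.sort_eq]

theorem sum_kthSmallest {M : Type*} [AddCommMonoid M] (g : ℕ → M) :
    ∑ t ∈ Icc 1 s, g (kthSmallest s f t) = ∑ j ∈ Icc 1 s, g (f j) := by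
  simpa [Multiset.map_map] using congrArg (fun M => (M.map g).sum) map_kthSmallest

end KthSmallest

theorem expVec_apply (m : ℕ) (c : ℕ → ℕ) (i b : ℕ) :
    expVec m c (i, b) = if 1 ≤ i ∧ i ≤ m ∧ c i = b then 1 else 0 := by
  classical
  simp only [expVec, Finsupp.finsetSum_apply, Finsupp.single_apply, Prod.mk.injEq, ite_and]
  rw [Finset.sum_ite_eq']
  simp [← ite_and, and_assoc]

section ExpVec

variable {m : ℕ} {c : ℕ → ℕ}

theorem expVec_apply_self {i : ℕ} (hi : 1 ≤ i) (him : i ≤ m) : expVec m c (i, c i) = 1 := by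
  simp [expVec_apply, hi, him]

theorem single_le_of_le_add_expVec {v e : (ℕ × ℕ) →₀ ℕ} {i b : ℕ} (h : v ≤ e + expVec m c)
    (hb : c i ≠ b) (hv : 0 < v (i, b)) : Finsupp.single (i, b) 1 ≤ e := by
  have hib := h (i, b)
  rw [Finsupp.add_apply, expVec_apply, if_neg fun h => hb h.2.2] at hib
  exact Finsupp.single_le_iff.2 (by omega)

theorem sum_Icc_two_expVec_le {s : ℕ} {w : ℕ → ℕ → ℕ} {e : (ℕ × ℕ) →₀ ℕ} (hs : 1 ≤ s)
    (hw : ∀ i, 1 ≤ i → i ≤ m → ∀ t ∈ Icc 1 s, c i ≤ w 1 i ∧ w 1 i ≤ w t i)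
    (h : ∑ t ∈ Icc 1 s, expVec m (w t) ≤ e + expVec m c) :
    ∑ t ∈ Icc 2 s, expVec m (w t) ≤ e := by
  have hIcc : Icc 1 s = insert 1 (Icc 2 s) := (insert_Icc_add_one_left_eq_Icc hs).symm
  rw [Finsupp.le_def]
  rintro ⟨i, b⟩
  have hib := h (i, b)
  rw [hIcc, sum_insert (by simp), Finsupp.add_apply, Finsupp.add_apply] at hib
  simp only [Finsupp.finsetSum_apply, expVec_apply] at hib ⊢
  by_cases hi : 1 ≤ i ∧ i ≤ m
  · simp only [hi, true_and] at hib ⊢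
    by_cases hcase : c i = b ∧ w 1 i ≠ b
    · -- then `c i < w 1 i ≤ w t i`, so no factor contains `X_{i b}`
      refine (sum_eq_zero fun t ht => if_neg fun hwt => ?_).trans_le (Nat.zero_le _)
      have := hw i hi.1 hi.2 t (by simp at ht ⊢; omega)
      omega
    · split_ifs at hib <;> omega
  · rw [sum_eq_zero fun t _ => if_neg fun h' => hi ⟨h'.1, h'.2.1⟩]
    exact Nat.zero_le _

end ExpVec

def sortDiagSeqs (s : ℕ) (a : ℕ → ℕ → ℕ) (t i : ℕ) : ℕ := kthSmallest s (fun j => a j i) t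

section SortDiagSeqs

variable {m s : ℕ} {k l : ℕ → ℕ} {a : ℕ → ℕ → ℕ}

theorem isDiagSeq_sortDiagSeqs (hk : MonotoneOn k (Set.Icc 1 s))
    (hl : MonotoneOn l (Set.Icc 1 s)) (ha : ∀ j ∈ Icc 1 s, IsDiagSeq m (k j) (l j) (a j))
    {t : ℕ} (ht : t ∈ Icc 1 s) :
    IsDiagSeq m (k t) (l t) (sortDiagSeqs s a t) := by
  have htS : t ∈ Set.Icc 1 s := by simpa using ht
  refine ⟨fun i hi him => ?_, ?_, ?_⟩
  · -- at least `t` entries of row `i + 1` are `≤ x`, each above a smaller entry of row `i`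
    set x := sortDiagSeqs s a t (i + 1)
    have hx : t ≤ #{j ∈ Icc 1 s | a j (i + 1) ≤ x} :=
      (pred_kthSmallest_iff (p := (· ≤ x)) (fun _ _ => le_trans) ht).1 le_rfl
    refine (pred_kthSmallest_iff (p := (· < x)) (fun _ _ => lt_of_le_of_lt) ht).2
      (hx.trans (card_le_card fun j => ?_))
    simp only [mem_filter]
    exact fun ⟨hj, hjx⟩ => ⟨hj, ((ha j hj).1 i hi him).trans_le hjx⟩
  · by_contra hlt
    have hcard : t ≤ #{j ∈ Icc 1 s | a j 1 < k t} :=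
      (pred_kthSmallest_iff (p := (· < k t)) (fun _ _ => lt_of_le_of_lt) ht).1 (not_le.1 hlt)
    have hsub : {j ∈ Icc 1 s | a j 1 < k t} ⊆ Ico 1 t := fun j => by
      simp only [mem_filter, mem_Icc, mem_Ico]
      refine fun ⟨hj, hjk⟩ => ⟨hj.1, lt_of_not_ge fun htj => hjk.not_ge ?_⟩
      exact (hk htS hj htj).trans (ha j (mem_Icc.2 hj)).2.1
    have := card_le_card hsub
    rw [Nat.card_Ico] at this
    have := htS.1
    omega
  · refine (pred_kthSmallest_iff (p := (· ≤ l t)) (fun _ _ => le_trans) ht).2 ?_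
    calc t = #(Icc 1 t) := by simp
      _ ≤ _ := card_le_card fun j => by
        simp only [mem_filter, mem_Icc]
        intro hj
        have hjs : j ∈ Icc 1 s := mem_Icc.2 ⟨hj.1, hj.2.trans htS.2⟩
        exact ⟨mem_Icc.1 hjs, (ha j hjs).2.2.trans (hl (by simpa using hjs) htS hj.2)⟩

theorem sum_expVec_sortDiagSeqs :
    ∑ t ∈ Icc 1 s, expVec m (sortDiagSeqs s a t) = ∑ j ∈ Icc 1 s, expVec m (a j) := by
  simp only [expVec]
  rw [sum_comm, sum_comm (s := Icc 1 s)]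
  exact sum_congr rfl fun i _ =>
    sum_kthSmallest (f := fun j => a j i) fun x => Finsupp.single (i, x) 1

end SortDiagSeqs

section Gaps

variable {m k l : ℕ} {a c : ℕ → ℕ}

theorem le_of_avoids_gaps (ha : ∀ i, 1 ≤ i → i < m → a i < a (i + 1)) (h1 : c 0 < a 1)
    (hgap : ∀ i, 1 ≤ i → i ≤ m → c (i - 1) < a i → c i ≤ a i) {i : ℕ} (hi : 1 ≤ i)
    (him : i ≤ m) : c i ≤ a i := by
  induction i, hi using Nat.le_induction with
  | base => exact hgap 1 le_rfl him h1
  | succ i hi ih =>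
    exact hgap (i + 1) (by omega) him
      (by simpa using (ih (by omega)).trans_lt (ha i hi (by omega)))

theorem tauGt_expVec_iff :
    tauGt (expVec m a) (expVec m c) ↔
      ∃ i, 1 ≤ i ∧ i ≤ m ∧ (∀ i', 1 ≤ i' → i' < i → a i' = c i') ∧ a i < c i := by
  constructor
  · rintro ⟨⟨i, b⟩, hlt, hbefore⟩
    rw [expVec_apply, expVec_apply] at hlt
    obtain ⟨hi, him, rfl⟩ : 1 ≤ i ∧ i ≤ m ∧ a i = b := by by_contra h; simp [h] at hlt
    have hca : c i ≠ a i := fun h => by simp [h, hi, him] at hlt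
    refine ⟨i, hi, him, fun i' hi' hi'i => ?_,
      lt_of_le_of_ne (not_lt.1 fun hlt' => hca ?_) hca.symm⟩
    · simpa [expVec_apply, hi', show i' ≤ m by omega] using hbefore (i', c i') (Or.inl hi'i)
    · simpa [expVec_apply, hi, him, eq_comm] using hbefore (i, c i) (Or.inr ⟨rfl, hlt'⟩)
  · rintro ⟨i, hi, him, hagree, hlt⟩
    refine ⟨(i, a i), by simp [expVec_apply, hi, him, hlt.ne'], ?_⟩
    rintro ⟨i', b'⟩ hq
    simp only [expVec_apply]
    rcases hq with hq | ⟨hrow, hq⟩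
    · by_cases hi' : 1 ≤ i'
      · rw [hagree i' hi' hq]
      · simp [hi']
    · simp only at hrow hq
      subst hrow
      split_ifs <;> omega

theorem exists_gap_of_tauGt (hc0 : c 0 < k) (ha : IsDiagSeq m k l a)
    (hgt : tauGt (expVec m a) (expVec m c)) :
    ∃ i, 1 ≤ i ∧ i ≤ m ∧ c (i - 1) < a i ∧ a i < c i := by
  obtain ⟨i, hi, him, hagree, hlt⟩ := tauGt_expVec_iff.1 hgt
  refine ⟨i, hi, him, ?_, hlt⟩
  rcases Nat.lt_or_ge 1 i with h | h
  · rw [← hagree (i - 1) (by omega) (by omega)]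
    simpa [Nat.sub_add_cancel hi] using ha.1 (i - 1) (by omega) (by omega)
  · obtain rfl : i = 1 := by omega
    exact hc0.trans_le ha.2.1

theorem isDiagSeq_update (hc : IsDiagSeq m k l c) (hc0 : k ≤ c 0 + 1) {i b : ℕ} (hi : 1 ≤ i)
    (him : i ≤ m) (hlow : c (i - 1) < b) (hhigh : b < c i) :
    IsDiagSeq m k l (Function.update c i b) := by
  refine ⟨fun i' h1 h2 => ?_, ?_, ?_⟩
  · by_cases h3 : i' = i
    · subst h3
      rw [Function.update_self, Function.update_of_ne (by omega)]
      exact hhigh.trans (hc.1 i' h1 h2)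
    · by_cases h4 : i' + 1 = i
      · subst h4
        rw [Function.update_of_ne h3, Function.update_self]
        simpa using hlow
      · rw [Function.update_of_ne h3, Function.update_of_ne h4]
        exact hc.1 i' h1 h2
  · rw [Function.update_apply]
    split_ifs with h
    · subst h
      simp only [Nat.sub_self] at hlow
      omega
    · exact hc.2.1
  · rw [Function.update_apply]
    split_ifs with h
    · subst h
      exact hhigh.le.trans hc.2.2
    · exact hc.2.2

theorem expVec_update_le (i b : ℕ) :
    expVec m (Function.update c i b) ≤ Finsupp.single (i, b) 1 + expVec m c := by
  rw [Finsupp.le_def]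
  rintro ⟨i', b'⟩
  simp only [Finsupp.add_apply, expVec_apply, Finsupp.single_apply, Function.update_apply,
    Prod.mk.injEq]
  split_ifs <;> omega

end Gaps

def diagExps (m k l : ℕ) : Set ((ℕ × ℕ) →₀ ℕ) := expVec m '' {c | IsDiagSeq m k l c}

def gapExps (m : ℕ) (c : ℕ → ℕ) : Set ((ℕ × ℕ) →₀ ℕ) :=
  {v | ∃ i b, 1 ≤ i ∧ i ≤ m ∧ c (i - 1) < b ∧ b < c i ∧ v = Finsupp.single (i, b) 1}

section Colon

variable {m s : ℕ} {k l : ℕ → ℕ} {c : ℕ → ℕ} {e : (ℕ × ℕ) →₀ ℕ}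

theorem exists_gap_or_sum_le (hs : 1 ≤ s) (hk : MonotoneOn k (Set.Icc 1 s))
    (hl : MonotoneOn l (Set.Icc 1 s)) (hc0 : c 0 < k 1) {a : ℕ → ℕ → ℕ}
    (ha : ∀ j ∈ Icc 1 s, IsDiagSeq m (k j) (l j) (a j))
    (h : ∑ j ∈ Icc 1 s, expVec m (a j) ≤ e + expVec m c) :
    (∃ v ∈ gapExps m c, v ≤ e) ∨ ∃ v ∈ ∑ j ∈ Icc 2 s, diagExps m (k j) (l j), v ≤ e := by
  by_cases hgap : ∃ j ∈ Icc 1 s, ∃ i, 1 ≤ i ∧ i ≤ m ∧ c (i - 1) < a j i ∧ a j i < c i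
  · obtain ⟨j, hj, i, hi, him, hlow, hhigh⟩ := hgap
    refine .inl ⟨_, ⟨i, a j i, hi, him, hlow, hhigh, rfl⟩,
      single_le_of_le_add_expVec h hhigh.ne' ?_⟩
    calc 0 < expVec m (a j) (i, a j i) := by rw [expVec_apply_self hi him]; exact one_pos
      _ ≤ _ := by
        rw [Finsupp.finsetSum_apply]
        exact single_le_sum (f := fun j' => expVec m (a j') (i, a j i))
          (fun _ _ => Nat.zero_le _) hj
  · push Not at hgap
    have hs1 : 1 ∈ Icc 1 s := mem_Icc.2 ⟨le_rfl, hs⟩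
    have hca : ∀ j ∈ Icc 1 s, ∀ i, 1 ≤ i → i ≤ m → c i ≤ a j i := fun j hj _ hi him =>
      le_of_avoids_gaps (ha j hj).1
        (hc0.trans_le ((hk (by simpa using hs1) (by simpa using hj) (mem_Icc.1 hj).1).trans
          (ha j hj).2.1)) (hgap j hj) hi him
    set w := sortDiagSeqs s a
    have hw : ∀ i, 1 ≤ i → i ≤ m → ∀ t ∈ Icc 1 s, c i ≤ w 1 i ∧ w 1 i ≤ w t i :=
      fun i hi him t ht => ⟨le_kthSmallest (fun j hj => hca j hj i hi him) hs1,
        le_kthSmallest (fun _ hj => kthSmallest_one_le hj) ht⟩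
    refine .inr ⟨_, Set.finsetSum_mem_finsetSum _ _ (fun t => expVec m (w t)) fun t ht =>
      ⟨_, isDiagSeq_sortDiagSeqs hk hl ha (Icc_subset_Icc_left one_le_two ht), rfl⟩,
      sum_Icc_two_expVec_le hs hw (by rwa [sum_expVec_sortDiagSeqs])⟩

theorem exists_le_add_expVec_iff (hs : 1 ≤ s)
    (hk : MonotoneOn k (Set.Icc 1 s)) (hl : MonotoneOn l (Set.Icc 1 s))
    (hc : IsDiagSeq m (k 1) (l 1) c) (hc0 : c 0 + 1 = k 1) (e : (ℕ × ℕ) →₀ ℕ) :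
    (∃ v ∈ (∑ j ∈ Icc 1 s, diagExps m (k j) (l j)) ∪
        expVec m '' {a | IsDiagSeq m (k 1) (l 1) a ∧ tauGt (expVec m a) (expVec m c)},
      v ≤ e + expVec m c) ↔
    ∃ v ∈ (∑ j ∈ Icc 2 s, diagExps m (k j) (l j)) ∪ gapExps m c, v ≤ e := by
  constructor
  · rintro ⟨v, hv | ⟨a, ⟨ha, hgt⟩, rfl⟩, hle⟩
    · obtain ⟨g, hg, rfl⟩ := (Set.mem_finsetSum _ _ _).1 hv
      choose! a ha hga using fun j (hj : j ∈ Icc 1 s) => hg hj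
      rw [← sum_congr rfl hga] at hle
      rcases exists_gap_or_sum_le hs hk hl (by omega) ha hle with ⟨v, hv, hve⟩ | ⟨v, hv, hve⟩
      exacts [⟨v, .inr hv, hve⟩, ⟨v, .inl hv, hve⟩]
    · obtain ⟨i, hi, him, hlow, hhigh⟩ := exists_gap_of_tauGt (by omega) ha hgt
      exact ⟨_, .inr ⟨i, a i, hi, him, hlow, hhigh, rfl⟩,
        single_le_of_le_add_expVec hle hhigh.ne'
          (by rw [expVec_apply_self hi him]; exact one_pos)⟩
  · rintro ⟨v, hv | ⟨i, b, hi, him, hlow, hhigh, rfl⟩, hle⟩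
    · refine ⟨expVec m c + v, .inl ?_, by rw [add_comm]; exact add_le_add hle le_rfl⟩
      rw [← insert_Icc_add_one_left_eq_Icc hs, sum_insert (by simp)]
      exact Set.add_mem_add ⟨c, hc, rfl⟩ hv
    · refine ⟨_, .inr ⟨_, ⟨isDiagSeq_update hc (by omega) hi him hlow hhigh, ?_⟩, rfl⟩,
        (expVec_update_le i b).trans (add_le_add hle le_rfl)⟩
      exact tauGt_expVec_iff.2 ⟨i, hi, him, fun i' _ hi' => Function.update_of_ne hi'.ne _ _,
        by simpa using hhigh⟩

end Colon

theorem diagMon_eq_monomial (K : Type*) [Field K] (m : ℕ) (c : ℕ → ℕ) :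
    diagMon K m c = monomial (expVec m c) 1 := by
  rw [diagMon, expVec, monomial_sum_one]
  rfl

theorem setOf_diagMon_eq_image (K : Type*) [Field K] (m : ℕ) (P : (ℕ → ℕ) → Prop) :
    {g | ∃ c, P c ∧ g = diagMon K m c} =
      (fun v => monomial v (1 : K)) '' (expVec m '' {c | P c}) := by
  ext g
  simp [diagMon_eq_monomial, eq_comm]

theorem prod_Jkl_eq_span (K : Type*) [Field K] (m : ℕ) (k l : ℕ → ℕ) (t : Finset ℕ) :
    ∏ j ∈ t, Jkl K m (k j) (l j) =
      Ideal.span ((fun v => monomial v (1 : K)) '' ∑ j ∈ t, diagExps m (k j) (l j)) := by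
  simp only [Jkl, setOf_diagMon_eq_image]
  exact MvPolynomial.prod_span_monomial_image t _

theorem setOf_X_gap_eq_image (K : Type*) [Field K] (m : ℕ) (c : ℕ → ℕ) :
    {P : MvPolynomial (ℕ × ℕ) K |
        ∃ i b : ℕ, 1 ≤ i ∧ i ≤ m ∧ c (i - 1) < b ∧ b < c i ∧ P = X (i, b)} =
      (fun v => monomial v (1 : K)) '' gapExps m c := by
  ext P
  simp [gapExps, X, eq_comm, and_assoc]

/-- `⟨f₁, …, f_u⟩` is encoded as the ideal generated by the diagonal monomials of `Y_{k₁l₁}` that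
are τ-greater than `f_{u+1}`. -/
theorem stmt_10_general (K : Type*) [Field K] (m s : ℕ) (hs : 2 ≤ s)
    (k l : ℕ → ℕ)
    (hk1 : 1 ≤ k 1) (hkmono : ∀ j, 1 ≤ j → j < s → k j ≤ k (j + 1))
    (hlmono : ∀ j, 1 ≤ j → j < s → l j ≤ l (j + 1))
    (c : ℕ → ℕ) (hc : IsDiagSeq m (k 1) (l 1) c) (hc0 : c 0 = k 1 - 1) :
    Submodule.colon
      ((∏ j ∈ Finset.Icc 1 s, Jkl K m (k j) (l j)) ⊔
        Ideal.span {g : MvPolynomial (ℕ × ℕ) K |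
          ∃ a, IsDiagSeq m (k 1) (l 1) a ∧ tauGt (expVec m a) (expVec m c) ∧
            g = diagMon K m a})
      (Ideal.span {diagMon K m c}) =
    (∏ j ∈ Finset.Icc 2 s, Jkl K m (k j) (l j)) ⊔
      Ideal.span {P : MvPolynomial (ℕ × ℕ) K |
        ∃ i b : ℕ, 1 ≤ i ∧ i ≤ m ∧ c (i - 1) < b ∧ b < c i ∧ P = MvPolynomial.X (i, b)} := by
  have hmono (f : ℕ → ℕ) (hf : ∀ j, 1 ≤ j → j < s → f j ≤ f (j + 1)) :
      MonotoneOn f (Set.Icc 1 s) :=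
    monotoneOn_of_le_add_one Set.ordConnected_Icc fun j _ hj hj1 => hf j hj.1 (by
      have := hj1.2; omega)
  have hτ := setOf_diagMon_eq_image K m
    fun a => IsDiagSeq m (k 1) (l 1) a ∧ tauGt (expVec m a) (expVec m c)
  simp only [and_assoc] at hτ
  rw [prod_Jkl_eq_span, prod_Jkl_eq_span, hτ, setOf_X_gap_eq_image, ← Ideal.span_union,
    ← Ideal.span_union, ← Set.image_union, ← Set.image_union, diagMon_eq_monomial]
  exact MvPolynomial.span_monomial_image_colon_eq
    (exists_le_add_expVec_iff (by omega) (hmono k hkmono) (hmono l hlmono) hc (by omega))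

/-- Lemma 2.4: Let `s ≥ 2`, `1 ≤ k₁ ≤ ⋯ ≤ k_s < n`,
`1 < l₁ ≤ ⋯ ≤ l_s ≤ n` with `k_i < l_i`, `l_i - k_i + 1 ≥ m`.  Set
`J = J_{k₁l₁}⋯J_{k_sl_s}` and let `f₁ > ⋯ > f_r` be all diagonal monomials of
`Y_{k₁l₁}` ordered decreasingly by τ.  Fix `0 ≤ u ≤ r - 1` and write
`f_{u+1} = X_{1c₁}⋯X_{mc_m}` (an arbitrary diagonal monomial of `Y_{k₁l₁}`),
`c₀ = k₁ - 1`.  Then `(⟨J, f₁, …, f_u⟩ : f_{u+1})` equals the ideal generated by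
`J_{k₂l₂}⋯J_{k_sl_s}` together with the variables `X_{ib}`, `1 ≤ i ≤ m`,
`c_{i-1} < b < c_i`.  Here `⟨f₁,…,f_u⟩` is the ideal generated by all diagonal
monomials of `Y_{k₁l₁}` that are τ-greater than `f_{u+1}`. -/
theorem stmt_10 (K : Type*) [Field K] (m n s : ℕ) (hm : 1 ≤ m) (hmn : m ≤ n) (hs : 2 ≤ s)
    (k l : ℕ → ℕ)
    (hk1 : 1 ≤ k 1) (hkmono : ∀ j, 1 ≤ j → j < s → k j ≤ k (j + 1)) (hks : k s < n)
    (hl1 : 1 < l 1) (hlmono : ∀ j, 1 ≤ j → j < s → l j ≤ l (j + 1)) (hls : l s ≤ n)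
    (hkl : ∀ j, 1 ≤ j → j ≤ s → k j < l j)
    (hlen : ∀ j, 1 ≤ j → j ≤ s → m ≤ l j - k j + 1)
    (c : ℕ → ℕ) (hc : IsDiagSeq m (k 1) (l 1) c) (hc0 : c 0 = k 1 - 1) :
    Submodule.colon
      ((∏ j ∈ Finset.Icc 1 s, Jkl K m (k j) (l j)) ⊔
        Ideal.span {g : MvPolynomial (ℕ × ℕ) K |
          ∃ a, IsDiagSeq m (k 1) (l 1) a ∧ tauGt (expVec m a) (expVec m c) ∧
            g = diagMon K m a})
      (Ideal.span {diagMon K m c}) =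
    (∏ j ∈ Finset.Icc 2 s, Jkl K m (k j) (l j)) ⊔
      Ideal.span {P : MvPolynomial (ℕ × ℕ) K |
        ∃ i b : ℕ, 1 ≤ i ∧ i ≤ m ∧ c (i - 1) < b ∧ b < c i ∧ P = MvPolynomial.X (i, b)} :=
  stmt_10_general K m s hs k l hk1 hkmono hlmono c hc hc0
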